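/- Let u = (u_s, u_e) be a branch with δ = |u_e - u_s|/2, and let v = (v_s, v_e) be another branch. If v is not in the relabel range of u and u is not in the relabel range of v, then the relabel cost max(|u_s - v_s|, |u_e - v_e|) is strictly greater than max(δ, |v_e - v_s|/2), i.e., greater than the cost of deleting u and inserting v. -/
import Mathlib

/-- `v` is in the relabel range of the branch `u = (u_s, u_e)` with
`δ = |u_e - u_s| / 2` if `u_s - δ ≤ v_s ≤ u_s + δ` and
`u_e - δ ≤ v_e ≤ u_e + δ`. -/
def InRelabelRange (u v : ℝ × ℝ) : Prop :=
  u.1 - |u.2 - u.1| / 2 ≤ v.1 ∧ v.1 ≤ u.1 + |u.2 - u.1| / 2 ∧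
  u.2 - |u.2 - u.1| / 2 ≤ v.2 ∧ v.2 ≤ u.2 + |u.2 - u.1| / 2

/-- **Relabel range pruning.** If `v` is not in the relabel range of `u` and
`u` is not in the relabel range of `v`, then the relabel cost
`max (|u_s - v_s|) (|u_e - v_e|)` is strictly greater than
`max (|u_e - u_s| / 2) (|v_e - v_s| / 2)`, i.e., strictly greater than the
cost of deleting `u` and inserting `v`. -/
theorem relabel_cost_gt_of_not_inRelabelRange (u v : ℝ × ℝ)
    (hv : ¬ InRelabelRange u v) (hu : ¬ InRelabelRange v u) :
    max |u.1 - v.1| |u.2 - v.2| > max (|u.2 - u.1| / 2) (|v.2 - v.1| / 2) := by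
  have h1 : max |u.1 - v.1| |u.2 - v.2| > |u.2 - u.1| / 2 := by
    by_contra h
    push_neg at h
    rw [max_le_iff] at h
    obtain ⟨ha, hb⟩ := h
    rw [abs_le] at ha hb
    exact hv ⟨by linarith [ha.1, ha.2], by linarith [ha.1], by linarith [hb.1], by linarith [hb.1]⟩
  have h2 : max |u.1 - v.1| |u.2 - v.2| > |v.2 - v.1| / 2 := by
    by_contra h
    push_neg at h
    rw [max_le_iff] at h
    obtain ⟨ha, hb⟩ := h
    rw [abs_le] at ha hb
    exact hu ⟨by linarith [ha.1], by linarith [ha.1], by linarith [hb.1], by linarith [hb.1]⟩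
  exact max_lt h1 h2
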